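/- Fix a positive integer k, and for each i ∈ {0,…,k} let a_i ∈ {-1,1}^k be any vector with exactly i coordinates equal to −1 (the value e_j(a_i) is independent of the choice since e_j is a symmetric polynomial). Then for all distinct j, j' ∈ {0,…,k}, ∑_{i=0}^{k} C(k,i)·e_j(a_i)·e_{j'}(a_i) = 0, where C(k,i) is the binomial coefficient. (Equivalently, the columns of the (k+1)×(k+1) matrix L·D̃_k are pairwise orthogonal, where D̃_k has (i,j) entry e_j(a_i) and L is the diagonal matrix with i-th diagonal entry √C(k,i).) -/

import Mathlib

/-!
Since `e_j` is symmetric, the weighted sum over the classes is the sum of `e_j(x) e_{j'}(x)`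
over all of `{-1,1}^k`. Write `x_S` for the vector whose `-1` entries are those in `S` and
expand both factors: the sum becomes `∑_{|A| = j, |B| = j'} ∑_S x_S^A x_S^B`, where
`x^A = ∏_{t ∈ A} x_t`.
These characters are orthogonal: `x_S^A = (-1)^{#(A ∩ S)}` is symmetric in `A` and `S`, so
`∑_S x_S^A x_S^B = ∏_t (1 + x_A(t) x_B(t))`, which has a zero factor at any `t ∈ A ∆ B`.
-/

/-- The `j`-th elementary symmetric polynomial in `k` variables:
`e_j(x) = ∑_{A ⊆ {1,…,k}, |A| = j} ∏_{i∈A} x_i`. -/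
def esymm (k j : ℕ) (x : Fin k → ℤ) : ℤ :=
  ∑ A ∈ Finset.powersetCard j (Finset.univ : Finset (Fin k)), ∏ i ∈ A, x i

open Finset

def signVec {ι : Type*} [DecidableEq ι] (S : Finset ι) (t : ι) : ℤ :=
  if t ∈ S then -1 else 1

section
variable {ι : Type*} [DecidableEq ι]

theorem prod_signVec_comm (A S : Finset ι) :
    ∏ t ∈ A, signVec S t = ∏ t ∈ S, signVec A t := by
  simp only [signVec, prod_ite_mem, prod_const, inter_comm]

theorem sum_prod_signVec_mul_prod_signVec_of_ne [Fintype ι] {A B : Finset ι} (h : A ≠ B) :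
    ∑ S : Finset ι, (∏ t ∈ A, signVec S t) * ∏ t ∈ B, signVec S t = 0 := by
  obtain ⟨t₀, ht₀⟩ := symmDiff_nonempty.2 h
  simp_rw [prod_signVec_comm A, prod_signVec_comm B, ← prod_mul_distrib]
  rw [← powerset_univ, ← prod_add_one]
  refine prod_eq_zero (mem_univ t₀) ?_
  rcases mem_symmDiff.1 ht₀ with ⟨hA, hB⟩ | ⟨hB, hA⟩ <;> simp [signVec, hA, hB]

theorem map_univ_val_signVec [Fintype ι] (S : Finset ι) :
    univ.val.map (signVec S) =
      Multiset.replicate #S (-1) + Multiset.replicate (Fintype.card ι - #S) 1 := by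
  have hS : S.val.map (signVec S) = Multiset.replicate #S (-1) := by
    rw [Multiset.map_congr (f := signVec S) (g := fun _ => -1) rfl fun t ht => if_pos ht,
      Multiset.map_const', card_val]
  have hSc : Sᶜ.val.map (signVec S) = Multiset.replicate (Fintype.card ι - #S) 1 := by
    rw [Multiset.map_congr (f := signVec S) (g := fun _ => 1) rfl
      fun t ht => if_neg (mem_compl.1 ht), Multiset.map_const', card_val, card_compl]
  rw [← hS, ← hSc, ← Multiset.map_add, ← Multiset.filter_add_not (· ∈ S) univ.val,
    ← filter_val, ← filter_val]
  congr <;> ext <;> simp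

theorem signVec_filter_eq_neg_one [Fintype ι] {x : ι → ℤ} (hx : ∀ t, x t = 1 ∨ x t = -1) :
    signVec {t | x t = -1} = x := by
  funext t
  rcases hx t with h | h <;> simp [signVec, h]

end

theorem esymm_eq_multiset_esymm {k : ℕ} (j : ℕ) (x : Fin k → ℤ) :
    esymm k j x = (univ.val.map x).esymm j :=
  (esymm_map_val x univ j).symm

theorem esymm_signVec_eq_of_card_eq {k j : ℕ} {S T : Finset (Fin k)} (h : #S = #T) :
    esymm k j (signVec S) = esymm k j (signVec T) := by
  rw [esymm_eq_multiset_esymm, esymm_eq_multiset_esymm, map_univ_val_signVec,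
    map_univ_val_signVec, h]

theorem sum_esymm_signVec_mul_esymm_signVec {k j j' : ℕ} (h : j ≠ j') :
    ∑ S : Finset (Fin k), esymm k j (signVec S) * esymm k j' (signVec S) = 0 := by
  simp_rw [esymm, sum_mul_sum]
  rw [sum_comm]
  refine sum_eq_zero fun A hA => ?_
  rw [sum_comm]
  refine sum_eq_zero fun B hB => sum_prod_signVec_mul_prod_signVec_of_ne ?_
  rintro rfl
  exact h ((mem_powersetCard.1 hA).2.symm.trans (mem_powersetCard.1 hB).2)

theorem esymm_eq_esymm_signVec {k j : ℕ} {x : Fin k → ℤ} (hx : ∀ t, x t = 1 ∨ x t = -1)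
    {S : Finset (Fin k)} (hS : #{t | x t = -1} = #S) :
    esymm k j x = esymm k j (signVec S) := by
  rw [← signVec_filter_eq_neg_one hx, esymm_signVec_eq_of_card_eq hS]

theorem stmt_2_general (k : ℕ) (a : ℕ → Fin k → ℤ)
    (ha1 : ∀ i ≤ k, ∀ t, a i t = 1 ∨ a i t = -1)
    (ha2 : ∀ i ≤ k, (Finset.univ.filter fun t => a i t = -1).card = i)
    (j j' : ℕ) (hjj' : j ≠ j') :
    ∑ i ∈ Finset.range (k + 1),
      (k.choose i : ℤ) * esymm k j (a i) * esymm k j' (a i) = 0 := by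
  have hclass : ∀ S : Finset (Fin k), esymm k j (a #S) * esymm k j' (a #S) =
      esymm k j (signVec S) * esymm k j' (signVec S) := by
    intro S
    have hS : #S ≤ k := card_le_univ S |>.trans_eq (Fintype.card_fin k)
    rw [esymm_eq_esymm_signVec (ha1 _ hS) (ha2 _ hS),
      esymm_eq_esymm_signVec (ha1 _ hS) (ha2 _ hS)]
  calc ∑ i ∈ range (k + 1), (k.choose i : ℤ) * esymm k j (a i) * esymm k j' (a i)
      = ∑ S ∈ (univ : Finset (Fin k)).powerset, esymm k j (a #S) * esymm k j' (a #S) := by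
        rw [sum_powerset_apply_card fun i => esymm k j (a i) * esymm k j' (a i), card_univ,
          Fintype.card_fin]
        simp only [nsmul_eq_mul, mul_assoc]
    _ = ∑ S : Finset (Fin k), esymm k j (signVec S) * esymm k j' (signVec S) := by
        rw [powerset_univ]
        exact sum_congr rfl fun S _ => hclass S
    _ = 0 := sum_esymm_signVec_mul_esymm_signVec hjj'

/-- Fix a positive integer `k`, and for each `i ∈ {0,…,k}` let
`a i ∈ {-1,1}^k` be any vector with exactly `i` coordinates equal to `−1`.
Then for all distinct `j, j' ∈ {0,…,k}`,
`∑_{i=0}^{k} C(k,i)·e_j(a i)·e_{j'}(a i) = 0`. -/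
theorem stmt_2 (k : ℕ) (hk : 0 < k) (a : ℕ → Fin k → ℤ)
    (ha1 : ∀ i ≤ k, ∀ t, a i t = 1 ∨ a i t = -1)
    (ha2 : ∀ i ≤ k, (Finset.univ.filter fun t => a i t = -1).card = i)
    (j j' : ℕ) (hj : j ≤ k) (hj' : j' ≤ k) (hjj' : j ≠ j') :
    ∑ i ∈ Finset.range (k + 1),
      (k.choose i : ℤ) * esymm k j (a i) * esymm k j' (a i) = 0 :=
  stmt_2_general k a ha1 ha2 j j' hjj'
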